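/- Let A be a d × n integer matrix, Θ := ℝ_{≥0}ⁿ with its Borel σ-algebra, and let G := (ℝ_{>0})ᵈ act on ℤ_{≥0}ᵈ × Θ by g·(b,c) := (b, g·c) where (g·c)_j := c_j ∏_{i=1}^d g_i^{a_{ij}}. Let π : ℤ_{≥0}ᵈ × Θ → Θ and π' : ℤ_{≥0}ᵈ × Θ → ℤ_{≥0}ᵈ be the projections, and set O* := {B ∈ B(ℤ_{≥0}ᵈ × Θ) : G·B = B}. Then O* = σ(π', R_α ∘ π, Z ∘ π : α ∈ ker A). -/

import Mathlib

open MeasureTheory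

noncomputable section

/-- The action of `g ∈ (ℝ_{>0})ᵈ` on `Θ = ℝ_{≥0}ⁿ`: `(g·c)_j = c_j ∏_i g_i^{a_{ij}}`. -/
def actA {d n : ℕ} (A : Matrix (Fin d) (Fin n) ℤ) (g : Fin d → NNReal)
    (c : Fin n → NNReal) : Fin n → NNReal :=
  fun j => c j * ∏ i, g i ^ (A i j)

/-- `G·B := {g·c : g ∈ (ℝ_{>0})ᵈ, c ∈ B}` for `B ⊆ Θ = ℝ_{≥0}ⁿ`. -/
def GorbitTheta {d n : ℕ} (A : Matrix (Fin d) (Fin n) ℤ) (B : Set (Fin n → NNReal)) :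
    Set (Fin n → NNReal) :=
  {x | ∃ g : Fin d → NNReal, (∀ i, 0 < g i) ∧ ∃ c ∈ B, x = actA A g c}

/-- `ker A := {α ∈ ℝⁿ : Aα = 0}`. -/
def kerA {d n : ℕ} (A : Matrix (Fin d) (Fin n) ℤ) : Set (Fin n → ℝ) :=
  {α | (A.map (Int.cast : ℤ → ℝ)).mulVec α = 0}

open Classical in
/-- The generalized odds ratio `R_α(c) = ∏_{j ∈ J(α)} c_j^{α_j}` if `c_j ≠ 0` for all
`j ∈ J(α)`, and `0` otherwise, where `J(α) = {j : α_j ≠ 0}`. -/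
def Rfun {n : ℕ} (α : Fin n → ℝ) (c : Fin n → NNReal) : ℝ :=
  if ∀ j, α j ≠ 0 → c j ≠ 0 then
    ∏ j ∈ Finset.univ.filter (fun j => α j ≠ 0), (c j : ℝ) ^ (α j)
  else 0

/-- The zero pattern `Z(c) ∈ {0,1}ⁿ`, `Z_j(c) = 1` iff `c_j > 0`. -/
def Zfun {n : ℕ} (c : Fin n → NNReal) : Fin n → ℝ :=
  fun j => if 0 < c j then 1 else 0

/-- `G·B` for `B ⊆ ℤ_{≥0}ᵈ × Θ`, the action being `g·(b,c) = (b, g·c)`. -/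
def GorbitProd {d n : ℕ} (A : Matrix (Fin d) (Fin n) ℤ)
    (B : Set ((Fin d → ℕ) × (Fin n → NNReal))) : Set ((Fin d → ℕ) × (Fin n → NNReal)) :=
  {x | ∃ g : Fin d → NNReal, (∀ i, 0 < g i) ∧ ∃ p ∈ B, x = (p.1, actA A g p.2)}


lemma rpow_finset_sum {x : ℝ} (hx : 0 < x) {ι : Type*} (s : Finset ι) (f : ι → ℝ) :
    ∏ j ∈ s, x ^ (f j) = x ^ (∑ j ∈ s, f j) := by
  rw [Real.rpow_def_of_pos hx, Finset.mul_sum, Real.exp_sum]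
  exact Finset.prod_congr rfl fun j _ => Real.rpow_def_of_pos hx (f j)


section ActGrp
variable {d n : ℕ} (A : Matrix (Fin d) (Fin n) ℤ)

lemma actA_one (c : Fin n → NNReal) : actA A 1 c = c := by
  funext j; simp [actA]

lemma actA_mul (g h : Fin d → NNReal) (c : Fin n → NNReal) :
    actA A g (actA A h c) = actA A (g * h) c := by
  funext j
  simp only [actA, Pi.mul_apply, mul_zpow, Finset.prod_mul_distrib]
  ring

lemma actA_inv_cancel (g : Fin d → NNReal) (hg : ∀ i, 0 < g i) (c : Fin n → NNReal) :
    actA A (fun i => (g i)⁻¹) (actA A g c) = c := by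
  rw [actA_mul]
  rw [show ((fun i => (g i)⁻¹) * g) = 1 by
    funext i; simp [inv_mul_cancel₀ (hg i).ne'], actA_one]

end ActGrp

lemma measurableSet_of_le {α : Type*} {m₁ m₂ : MeasurableSpace α} (h : m₁ ≤ m₂) {s : Set α}
    (hs : MeasurableSet[m₁] s) : MeasurableSet[m₂] s := h _ hs

section Inv
variable {d n : ℕ} (A : Matrix (Fin d) (Fin n) ℤ)

lemma prod_zpow_pos (g : Fin d → NNReal) (hg : ∀ i, 0 < g i) (j : Fin n) :
    0 < ∏ i, g i ^ (A i j) := by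
  rw [pos_iff_ne_zero, Finset.prod_ne_zero_iff]
  exact fun i _ => zpow_ne_zero _ (hg i).ne'

lemma actA_pos_iff (g : Fin d → NNReal) (hg : ∀ i, 0 < g i) (c : Fin n → NNReal) (j : Fin n) :
    actA A g c j ≠ 0 ↔ c j ≠ 0 := by
  have h := (prod_zpow_pos A g hg j).ne'
  simp [actA, h]

lemma Zfun_actA (g : Fin d → NNReal) (hg : ∀ i, 0 < g i) (c : Fin n → NNReal) :
    Zfun (actA A g c) = Zfun c := by
  funext j
  have := actA_pos_iff A g hg c j
  simp only [Zfun, pos_iff_ne_zero]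
  simp [this]

lemma Rfun_actA (α : Fin n → ℝ) (hα : α ∈ kerA A) (g : Fin d → NNReal)
    (hg : ∀ i, 0 < g i) (c : Fin n → NNReal) :
    Rfun α (actA A g c) = Rfun α c := by
  classical
  by_cases hc : ∀ j, α j ≠ 0 → c j ≠ 0
  · have hc' : ∀ j, α j ≠ 0 → actA A g c j ≠ 0 := fun j h =>
      (actA_pos_iff A g hg c j).2 (hc j h)
    rw [Rfun, Rfun, if_pos hc', if_pos hc]
    have key : ∀ j ∈ Finset.univ.filter (fun j => α j ≠ 0),
        ((actA A g c j : ℝ)) ^ (α j)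
          = ((c j : ℝ) ^ α j) * ∏ i, ((g i : ℝ) ^ ((A i j : ℝ) * α j)) := by
      intro j hj
      simp only [Finset.mem_filter] at hj
      have hcj : (0:ℝ) < (c j : ℝ) := by
        have := hc j hj.2
        positivity
      have hco : ((actA A g c j : ℝ)) = (c j : ℝ) * ∏ i, (g i : ℝ) ^ ((A i j : ℝ)) := by
        simp only [actA, NNReal.coe_mul, NNReal.coe_prod]
        congr 1
        refine Finset.prod_congr rfl fun i _ => ?_
        rw [← NNReal.rpow_intCast, NNReal.coe_rpow]
      rw [hco, Real.mul_rpow (le_of_lt hcj) (by positivity)]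
      congr 1
      rw [← Real.finset_prod_rpow _ _ (fun i _ => by positivity)]
      refine Finset.prod_congr rfl fun i _ => ?_
      rw [← Real.rpow_mul (by positivity)]
    rw [Finset.prod_congr rfl key, Finset.prod_mul_distrib]
    convert mul_one _
    rw [Finset.prod_comm]
    refine Finset.prod_eq_one fun i _ => ?_
    have hgi : (0:ℝ) < (g i : ℝ) := hg i
    rw [rpow_finset_sum hgi]
    have hsum : (∑ j ∈ Finset.univ.filter (fun j => α j ≠ 0), (A i j : ℝ) * α j)
        = ∑ j, (A i j : ℝ) * α j :=
      Finset.sum_filter_of_ne (fun x _ hx => by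
        intro h0; rw [h0, mul_zero] at hx; exact hx rfl)
    have hker : (∑ j, (A i j : ℝ) * α j) = 0 := by
      have := congrFun hα i
      simpa [Matrix.mulVec, dotProduct, Matrix.map_apply] using this
    rw [hsum, hker, Real.rpow_zero]
  · have hc' : ¬ ∀ j, α j ≠ 0 → actA A g c j ≠ 0 := by
      intro h; exact hc fun j hj => (actA_pos_iff A g hg c j).1 (h j hj)
    rw [Rfun, Rfun, if_neg hc', if_neg hc]

end Inv



section Sat
variable {d n : ℕ} (A : Matrix (Fin d) (Fin n) ℤ)

lemma gorbitTheta_eq_iff {B : Set (Fin n → NNReal)} :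
    GorbitTheta A B = B ↔
      ∀ g : Fin d → NNReal, (∀ i, 0 < g i) → ∀ c ∈ B, actA A g c ∈ B := by
  constructor
  · rintro h g hg c hc
    rw [← h]; exact ⟨g, hg, c, hc, rfl⟩
  · intro h
    apply Set.Subset.antisymm
    · rintro x ⟨g, hg, c, hc, rfl⟩; exact h g hg c hc
    · intro c hc; exact ⟨1, fun i => one_pos, c, hc, (actA_one A c).symm⟩

lemma mem_of_sat_theta {B : Set (Fin n → NNReal)} (hB : GorbitTheta A B = B)
    {g : Fin d → NNReal} (hg : ∀ i, 0 < g i) (c : Fin n → NNReal) :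
    actA A g c ∈ B ↔ c ∈ B := by
  constructor
  · intro h
    have hpos : ∀ i, 0 < (fun i => (g i)⁻¹) i :=
      fun i => pos_iff_ne_zero.2 (inv_ne_zero (hg i).ne')
    have := (gorbitTheta_eq_iff A).1 hB _ hpos _ h
    rwa [actA_inv_cancel A g hg c] at this
  · intro h; exact (gorbitTheta_eq_iff A).1 hB g hg c h

lemma gorbitProd_eq_iff {B : Set ((Fin d → ℕ) × (Fin n → NNReal))} :
    GorbitProd A B = B ↔
      ∀ g : Fin d → NNReal, (∀ i, 0 < g i) → ∀ p ∈ B, (p.1, actA A g p.2) ∈ B := by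
  constructor
  · rintro h g hg p hp
    rw [← h]; exact ⟨g, hg, p, hp, rfl⟩
  · intro h
    apply Set.Subset.antisymm
    · rintro x ⟨g, hg, p, hp, rfl⟩; exact h g hg p hp
    · intro p hp
      exact ⟨1, fun i => one_pos, p, hp, by rw [actA_one]⟩

lemma mem_of_sat_prod {B : Set ((Fin d → ℕ) × (Fin n → NNReal))} (hB : GorbitProd A B = B)
    {g : Fin d → NNReal} (hg : ∀ i, 0 < g i) (p : (Fin d → ℕ) × (Fin n → NNReal)) :
    (p.1, actA A g p.2) ∈ B ↔ p ∈ B := by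
  constructor
  · intro h
    have hpos : ∀ i, 0 < (fun i => (g i)⁻¹) i :=
      fun i => pos_iff_ne_zero.2 (inv_ne_zero (hg i).ne')
    have := (gorbitProd_eq_iff A).1 hB _ hpos _ h
    simp only [actA_inv_cancel A g hg] at this
    exact this
  · intro h; exact (gorbitProd_eq_iff A).1 hB g hg p h

/-- The σ-algebra of `G`-saturated sets. -/
def satAlg : MeasurableSpace ((Fin d → ℕ) × (Fin n → NNReal)) where
  MeasurableSet' B := GorbitProd A B = B
  measurableSet_empty := by
    show GorbitProd A ∅ = ∅
    rw [gorbitProd_eq_iff]; intro g hg p hp; exact absurd hp (Set.notMem_empty p)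
  measurableSet_compl := by
    intro B hB
    show GorbitProd A Bᶜ = Bᶜ
    rw [gorbitProd_eq_iff]
    intro g hg p hp hmem
    exact hp ((mem_of_sat_prod A hB hg p).1 hmem)
  measurableSet_iUnion := by
    intro f hf
    show GorbitProd A (⋃ i, f i) = _
    rw [gorbitProd_eq_iff]
    intro g hg p hp
    obtain ⟨i, hi⟩ := Set.mem_iUnion.1 hp
    exact Set.mem_iUnion.2 ⟨i, (gorbitProd_eq_iff A).1 (hf i) g hg p hi⟩

lemma comap_le_satAlg {β : Type*} [m : MeasurableSpace β]
    (f : (Fin d → ℕ) × (Fin n → NNReal) → β)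
    (hf : ∀ (g : Fin d → NNReal), (∀ i, 0 < g i) → ∀ p, f (p.1, actA A g p.2) = f p) :
    MeasurableSpace.comap f m ≤ satAlg A := by
  rintro s ⟨t, ht, rfl⟩
  show GorbitProd A _ = _
  rw [gorbitProd_eq_iff]
  intro g hg p hp
  show f _ ∈ t
  rw [hf g hg p]
  exact hp

end Sat

section Meas
variable {n : ℕ}

lemma measurable_Rfun (α : Fin n → ℝ) : Measurable (Rfun α) := by
  classical
  have hrw : Rfun α = fun c => if (∀ j, α j ≠ 0 → c j ≠ 0)
      then Real.exp (∑ j ∈ Finset.univ.filter (fun j => α j ≠ 0),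
        Real.log ((c j : ℝ)) * α j) else 0 := by
    funext c
    rw [Rfun]
    split_ifs with h
    · rw [Real.exp_sum]
      refine Finset.prod_congr rfl fun j hj => ?_
      simp only [Finset.mem_filter] at hj
      have hcj : (0:ℝ) < (c j : ℝ) := by
        have := h j hj.2; positivity
      rw [Real.rpow_def_of_pos hcj]
    · rfl
  rw [hrw]
  have hset : MeasurableSet {c : Fin n → NNReal | ∀ j, α j ≠ 0 → c j ≠ 0} := by
    have heq : {c : Fin n → NNReal | ∀ j, α j ≠ 0 → c j ≠ 0}
        = ⋂ j, {c : Fin n → NNReal | α j ≠ 0 → c j ≠ 0} := by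
      ext c; simp [Set.mem_iInter]
    rw [heq]
    refine MeasurableSet.iInter fun j => ?_
    by_cases hj : α j = 0
    · have : {c : Fin n → NNReal | α j ≠ 0 → c j ≠ 0} = Set.univ := by
        ext c; simp [hj]
      rw [this]; exact MeasurableSet.univ
    · have : {c : Fin n → NNReal | α j ≠ 0 → c j ≠ 0}
          = (fun c : Fin n → NNReal => c j) ⁻¹' ({0}ᶜ) := by
        ext c; simp [hj]
      rw [this]
      exact measurable_pi_apply j (measurableSet_singleton 0).compl
  refine Measurable.ite hset ?_ measurable_const
  refine Real.measurable_exp.comp (Finset.measurable_sum _ fun j _ => ?_)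
  exact (Real.measurable_log.comp
    (measurable_coe_nnreal_real.comp (measurable_pi_apply j))).mul_const (α j)

lemma measurable_Zfun : Measurable (Zfun (n := n)) := by
  refine measurable_pi_lambda _ fun j => ?_
  refine Measurable.ite ?_ measurable_const measurable_const
  have : {c : Fin n → NNReal | 0 < c j} = (fun c : Fin n → NNReal => c j) ⁻¹' (Set.Ioi 0) := by
    ext c; simp
  rw [this]
  exact measurable_pi_apply j measurableSet_Ioi

end Meas

/-- The σ-algebra on `Θ` generated by the `R_α` (`α ∈ ker A`) and `Z`. -/
def NAlg {d n : ℕ} (A : Matrix (Fin d) (Fin n) ℤ) : MeasurableSpace (Fin n → NNReal) :=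
  (⨆ α ∈ kerA A, MeasurableSpace.comap (Rfun α) (inferInstance : MeasurableSpace ℝ)) ⊔
    MeasurableSpace.comap Zfun (inferInstance : MeasurableSpace (Fin n → ℝ))

/-- The trace σ-algebra `{D | D ∩ Θs ∈ N}`. -/
def traceAlg {α : Type*} (N : MeasurableSpace α) {Θs : Set α}
    (hΘs : MeasurableSet[N] Θs) : MeasurableSpace α where
  MeasurableSet' D := MeasurableSet[N] (D ∩ Θs)
  measurableSet_empty := by
    show MeasurableSet[N] (∅ ∩ Θs)
    simpa using (MeasurableSet.empty : MeasurableSet[N] ∅)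
  measurableSet_compl := by
    intro D hD
    show MeasurableSet[N] (Dᶜ ∩ Θs)
    have : Dᶜ ∩ Θs = Θs \ (D ∩ Θs) := by
      ext x; simp only [Set.mem_inter_iff, Set.mem_compl_iff, Set.mem_diff]; tauto
    rw [this]
    exact hΘs.diff hD
  measurableSet_iUnion := by
    intro f hf
    show MeasurableSet[N] ((⋃ i, f i) ∩ Θs)
    rw [Set.iUnion_inter]
    exact MeasurableSet.iUnion hf

section Stratum
variable {d n : ℕ} (A : Matrix (Fin d) (Fin n) ℤ)

open Classical in
lemma stratum_main (B : Set (Fin n → NNReal)) (hB : MeasurableSet B)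
    (hsat : GorbitTheta A B = B) (S : Set (Fin n)) :
    MeasurableSet[NAlg A] (B ∩ {c | ∀ j, c j ≠ 0 ↔ j ∈ S}) := by
  classical
  have hNdef : NAlg A = (⨆ α ∈ kerA A, MeasurableSpace.comap (Rfun α)
        (inferInstance : MeasurableSpace ℝ)) ⊔
      MeasurableSpace.comap Zfun (inferInstance : MeasurableSpace (Fin n → ℝ)) := rfl
  set Θs : Set (Fin n → NNReal) := {c | ∀ j, c j ≠ 0 ↔ j ∈ S} with hΘsdef
  -- Θs is N-measurable via Zfun
  have hΘs : MeasurableSet[NAlg A] Θs := by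
    have heq : Θs = Zfun ⁻¹' {fun j => if j ∈ S then (1:ℝ) else 0} := by
      ext c
      simp only [Set.mem_preimage, Set.mem_singleton_iff, funext_iff, Zfun, hΘsdef,
        Set.mem_setOf_eq]
      constructor
      · intro h j
        by_cases hj : j ∈ S
        · rw [if_pos hj, if_pos (pos_iff_ne_zero.2 ((h j).2 hj))]
        · rw [if_neg hj, if_neg (by rw [pos_iff_ne_zero]; simpa [hj] using (h j))]
      · intro h j
        have := h j
        by_cases hj : j ∈ S
        · simp only [if_pos hj] at this
          refine ⟨fun _ => hj, fun _ => ?_⟩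
          rw [← pos_iff_ne_zero]
          by_contra hcj
          rw [if_neg hcj] at this
          norm_num at this
        · simp only [if_neg hj] at this
          constructor
          · intro hcj
            rw [if_pos (pos_iff_ne_zero.2 hcj)] at this
            norm_num at this
          · intro h'; exact absurd h' hj
    rw [heq]
    have hle0 : MeasurableSpace.comap Zfun
        (inferInstance : MeasurableSpace (Fin n → ℝ)) ≤ NAlg A := by
      rw [hNdef]; exact le_sup_right
    exact measurableSet_of_le hle0
      ⟨{fun j => if j ∈ S then (1:ℝ) else 0}, measurableSet_singleton _, rfl⟩
  -- linear algebra setup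
  let Ps : (Fin n → ℝ) →ₗ[ℝ] (Fin n → ℝ) :=
    { toFun := fun x j => if j ∈ S then x j else 0
      map_add' := fun x y => by funext j; by_cases hj : j ∈ S <;> simp [hj]
      map_smul' := fun r x => by funext j; by_cases hj : j ∈ S <;> simp [hj] }
  have hPs_apply : ∀ x j, Ps x j = if j ∈ S then x j else 0 := fun _ _ => rfl
  let Ts : (Fin d → ℝ) →ₗ[ℝ] (Fin n → ℝ) :=
    { toFun := fun t j => if j ∈ S then ∑ i, (A i j : ℝ) * t i else 0
      map_add' := fun x y => by
        funext j; by_cases hj : j ∈ S <;>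
          simp [hj, mul_add, Finset.sum_add_distrib]
      map_smul' := fun r x => by
        funext j; by_cases hj : j ∈ S <;>
          simp [hj, Finset.mul_sum]
        ring_nf
        exact Finset.sum_congr rfl fun i _ => by ring }
  have hTs_apply : ∀ t j, Ts t j = if j ∈ S then ∑ i, (A i j : ℝ) * t i else 0 :=
    fun _ _ => rfl
  set V : Submodule ℝ (Fin n → ℝ) := LinearMap.range Ts with hV
  obtain ⟨W, hW⟩ := Submodule.exists_isCompl V
  let q : (Fin n → ℝ) →ₗ[ℝ] (Fin n → ℝ) :=
    W.subtype ∘ₗ (W.linearProjOfIsCompl V hW.symm)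
  have hqV : ∀ v ∈ V, q v = 0 := by
    intro v hv
    show W.subtype (W.linearProjOfIsCompl V hW.symm v) = 0
    have : W.linearProjOfIsCompl V hW.symm ((⟨v, hv⟩ : V) : Fin n → ℝ) = 0 :=
      Submodule.linearProjOfIsCompl_apply_right hW.symm ⟨v, hv⟩
    rw [show (((⟨v, hv⟩ : V) : Fin n → ℝ)) = v from rfl] at this
    rw [this]; simp
  have hsub : ∀ x, x - q x ∈ V := by
    intro x
    obtain ⟨w, hw, v, hv, hwv⟩ := Submodule.mem_sup.1
      (by rw [hW.symm.sup_eq_top]; exact Submodule.mem_top (x := x))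
    have hqx : q x = w := by
      have : q x = q w + q v := by rw [← map_add, hwv]
      rw [this, hqV v hv, add_zero]
      show W.subtype (W.projectionOnto V hW.symm ((⟨w, hw⟩ : W) : Fin n → ℝ)) = w
      rw [Submodule.projectionOnto_apply_left hW.symm ⟨w, hw⟩]
      rfl
    rw [hqx, ← hwv]
    simpa using hv
  let q' : (Fin n → ℝ) →ₗ[ℝ] (Fin n → ℝ) := q ∘ₗ Ps
  let αf : Fin n → Fin n → ℝ := fun k j => q' (Pi.single j 1) k
  have hlin : ∀ x k, q' x k = ∑ j, x j * αf k j := by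
    intro x k
    have hx := pi_eq_sum_univ x
    calc q' x k = q' (∑ j, x j • fun j' => if j = j' then (1:ℝ) else 0) k := by rw [← hx]
      _ = ∑ j, x j * αf k j := by
          rw [map_sum]
          simp only [Finset.sum_apply]
          refine Finset.sum_congr rfl fun j _ => ?_
          rw [LinearMap.map_smul]
          have : (fun j' => if j = j' then (1:ℝ) else 0) = Pi.single j 1 := by
            funext j'; rw [Pi.single_apply]; simp [eq_comm]
          rw [this]
          rfl
  have hker : ∀ k, αf k ∈ kerA A := by
    intro k
    show (A.map (Int.cast : ℤ → ℝ)).mulVec (αf k) = 0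
    funext i
    have h1 : (A.map (Int.cast : ℤ → ℝ)).mulVec (αf k) i
        = ∑ j, (A i j : ℝ) * αf k j := by
      simp [Matrix.mulVec, dotProduct, Matrix.map_apply]
    have h2 : Ps (fun j => (A i j : ℝ)) = Ts (Pi.single i 1) := by
      funext j
      rw [hPs_apply, hTs_apply]
      by_cases hj : j ∈ S
      · rw [if_pos hj, if_pos hj]
        rw [Finset.sum_congr rfl (fun i' _ => by rw [Pi.single_apply])]
        simp
      · rw [if_neg hj, if_neg hj]
    have h3 : q' (fun j => (A i j : ℝ)) = 0 := by
      show q (Ps fun j => (A i j : ℝ)) = 0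
      rw [h2]
      exact hqV _ (LinearMap.mem_range_self Ts _)
    rw [h1, ← hlin, h3]
    rfl
  have hsupp : ∀ k j, j ∉ S → αf k j = 0 := by
    intro k j hj
    have hzero : Ps (Pi.single j 1) = 0 := by
      funext j'
      rw [hPs_apply]
      by_cases hj' : j' ∈ S
      · rw [if_pos hj', Pi.single_apply,
          if_neg (fun h : j' = j => hj (h ▸ hj'))]
        rfl
      · rw [if_neg hj']
        rfl
    show q (Ps (Pi.single j 1)) k = 0
    rw [hzero, map_zero]
    rfl
  -- the log/exp coordinates
  let Es : (Fin n → ℝ) → (Fin n → NNReal) :=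
    fun x j => if j ∈ S then Real.toNNReal (Real.exp (x j)) else 0
  let Lext : (Fin n → NNReal) → (Fin n → ℝ) := fun c j => Real.log (c j)
  have hEs_meas : Measurable Es := by
    refine measurable_pi_lambda _ fun j => ?_
    by_cases hj : j ∈ S
    · simp only [Es, if_pos hj]
      exact measurable_real_toNNReal.comp (Real.measurable_exp.comp (measurable_pi_apply j))
    · simp only [Es, if_neg hj]
      exact measurable_const
  set B' : Set (Fin n → ℝ) := Es ⁻¹' B with hB'def
  have hB'meas : MeasurableSet B' := hEs_meas hB
  have hEL : ∀ c ∈ Θs, Es (Lext c) = c := by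
    intro c hc
    have hc' : ∀ j, c j ≠ 0 ↔ j ∈ S := hc
    funext j
    by_cases hj : j ∈ S
    · have hcj : (0:ℝ) < (c j : ℝ) := by
        have := (hc' j).2 hj; positivity
      simp only [Es, Lext, if_pos hj]
      rw [Real.exp_log hcj, Real.toNNReal_coe]
    · have : c j = 0 := by
        by_contra h
        exact hj ((hc' j).1 h)
      simp only [Es, if_neg hj, this]
  have hEsPs : ∀ x, Es (Ps x) = Es x := by
    intro x
    funext j
    by_cases hj : j ∈ S <;> simp [Es, hPs_apply, hj]
  have htrans : ∀ (t : Fin d → ℝ) x,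
      Es (x + Ts t) = actA A (fun i => Real.toNNReal (Real.exp (t i))) (Es x) := by
    intro t x
    funext j
    by_cases hj : j ∈ S
    · apply NNReal.coe_injective
      have hfac : ∀ i : Fin d, ((Real.toNNReal (Real.exp (t i)) ^ (A i j) : NNReal) : ℝ)
          = Real.exp ((A i j : ℝ) * t i) := by
        intro i
        rw [NNReal.coe_zpow, Real.coe_toNNReal _ (Real.exp_pos _).le,
          ← Real.rpow_intCast (Real.exp (t i)) (A i j),
          Real.rpow_def_of_pos (Real.exp_pos _), Real.log_exp]
        ring_nf
      have hL : ((Es (x + Ts t) j : NNReal) : ℝ)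
          = Real.exp (x j + ∑ i, (A i j : ℝ) * t i) := by
        simp only [Es, Pi.add_apply, hTs_apply, if_pos hj]
        exact Real.coe_toNNReal _ (Real.exp_pos _).le
      have hR : ((actA A (fun i => Real.toNNReal (Real.exp (t i))) (Es x) j : NNReal) : ℝ)
          = Real.exp (x j) * ∏ i, Real.exp ((A i j : ℝ) * t i) := by
        simp only [actA, NNReal.coe_mul, NNReal.coe_prod, Es, if_pos hj]
        rw [Real.coe_toNNReal _ (Real.exp_pos _).le]
        congr 1
        exact Finset.prod_congr rfl fun i _ => hfac i
      rw [hL, hR, ← Real.exp_sum, ← Real.exp_add]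
    · simp only [Es, actA, if_neg hj, zero_mul]
  have hinv : ∀ (t : Fin d → ℝ) x, x + Ts t ∈ B' ↔ x ∈ B' := by
    intro t x
    show Es (x + Ts t) ∈ B ↔ Es x ∈ B
    rw [htrans]
    exact mem_of_sat_theta A hsat (fun i => Real.toNNReal_pos.2 (Real.exp_pos _)) _
  have hPsB' : ∀ x, x ∈ B' ↔ Ps x ∈ B' := by
    intro x
    show Es x ∈ B ↔ Es (Ps x) ∈ B
    rw [hEsPs]
  have hq'B' : ∀ x, x ∈ B' ↔ q' x ∈ B' := by
    intro x
    rw [hPsB' x]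
    obtain ⟨t, ht⟩ := hsub (Ps x)
    have hx : q' x + Ts t = Ps x := by
      show q (Ps x) + Ts t = Ps x
      rw [ht]; ring
    rw [← hx]
    exact hinv t (q' x)
  -- log identity
  have hlogR : ∀ c ∈ Θs, ∀ k, q' (Lext c) k = Real.log (Rfun (αf k) c) := by
    intro c hc k
    have hc' : ∀ j, c j ≠ 0 ↔ j ∈ S := hc
    have hcond : ∀ j, αf k j ≠ 0 → c j ≠ 0 := by
      intro j hj h0
      exact hj (hsupp k j (fun hmem => (hc' j).2 hmem h0))
    rw [Rfun, if_pos hcond]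
    have hpos : ∀ j ∈ Finset.univ.filter (fun j => αf k j ≠ 0),
        (0:ℝ) < (c j : ℝ) := by
      intro j hj
      simp only [Finset.mem_filter] at hj
      have := hcond j hj.2
      positivity
    rw [Real.log_prod (fun j hj => (Real.rpow_pos_of_pos (hpos j hj) _).ne')]
    have hterm : ∀ j ∈ Finset.univ.filter (fun j => αf k j ≠ 0),
        Real.log ((c j : ℝ) ^ (αf k j)) = Real.log ((c j : ℝ)) * αf k j := by
      intro j hj
      rw [Real.log_rpow (hpos j hj)]
      ring
    rw [Finset.sum_congr rfl hterm]
    have hext : (∑ j ∈ Finset.univ.filter (fun j => αf k j ≠ 0),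
        Real.log ((c j : ℝ)) * αf k j) = ∑ j, Real.log ((c j : ℝ)) * αf k j :=
      Finset.sum_filter_of_ne (fun x _ hx => by
        intro h0; rw [h0, mul_zero] at hx; exact hx rfl)
    rw [hext, hlin]
  -- assemble
  have hBS : B ∩ Θs = ((fun c => q' (Lext c)) ⁻¹' B') ∩ Θs := by
    ext c
    simp only [Set.mem_inter_iff, Set.mem_preimage]
    constructor
    · rintro ⟨hcB, hcS⟩
      refine ⟨?_, hcS⟩
      rw [← hq'B' (Lext c)]
      show Es (Lext c) ∈ B
      rw [hEL c hcS]; exact hcB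
    · rintro ⟨hcB, hcS⟩
      refine ⟨?_, hcS⟩
      rw [← hq'B' (Lext c)] at hcB
      have : Es (Lext c) ∈ B := hcB
      rwa [hEL c hcS] at this
  rw [hBS]
  -- trace sigma-algebra argument
  have hle : (⨆ k : Fin n, MeasurableSpace.comap (fun c => q' (Lext c) k)
      (inferInstance : MeasurableSpace ℝ)) ≤ traceAlg (NAlg A) hΘs := by
    refine iSup_le fun k => ?_
    rintro s ⟨T, hT, rfl⟩
    show MeasurableSet[NAlg A] ((fun c => q' (Lext c) k) ⁻¹' T ∩ Θs)
    have heq : (fun c => q' (Lext c) k) ⁻¹' T ∩ Θs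
        = (Rfun (αf k)) ⁻¹' (Real.log ⁻¹' T) ∩ Θs := by
      ext c
      simp only [Set.mem_inter_iff, Set.mem_preimage]
      constructor
      · rintro ⟨h1, h2⟩
        refine ⟨?_, h2⟩
        rw [← hlogR c h2 k]; exact h1
      · rintro ⟨h1, h2⟩
        refine ⟨?_, h2⟩
        rw [hlogR c h2 k]; exact h1
    rw [heq]
    refine MeasurableSet.inter ?_ hΘs
    have hcomap : MeasurableSet[MeasurableSpace.comap (Rfun (αf k))
        (inferInstance : MeasurableSpace ℝ)] ((Rfun (αf k)) ⁻¹' (Real.log ⁻¹' T)) :=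
      ⟨Real.log ⁻¹' T, Real.measurable_log hT, rfl⟩
    have hsub2 : MeasurableSpace.comap (Rfun (αf k))
        (inferInstance : MeasurableSpace ℝ) ≤ NAlg A := by
      rw [hNdef]
      exact le_trans (le_iSup₂ (f := fun α _ => MeasurableSpace.comap (Rfun α)
        (inferInstance : MeasurableSpace ℝ)) (αf k) (hker k)) le_sup_left
    exact measurableSet_of_le hsub2 hcomap
  have hmem : MeasurableSet[⨆ k : Fin n, MeasurableSpace.comap (fun c => q' (Lext c) k)
      (inferInstance : MeasurableSpace ℝ)] ((fun c => q' (Lext c)) ⁻¹' B') := by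
    have hpi : (inferInstance : MeasurableSpace (Fin n → ℝ))
        = ⨆ k : Fin n, MeasurableSpace.comap (fun x : Fin n → ℝ => x k)
          (inferInstance : MeasurableSpace ℝ) := rfl
    have hm0 : MeasurableSet[MeasurableSpace.comap (fun c => q' (Lext c))
        (inferInstance : MeasurableSpace (Fin n → ℝ))] ((fun c => q' (Lext c)) ⁻¹' B') :=
      ⟨B', hB'meas, rfl⟩
    rw [hpi, MeasurableSpace.comap_iSup] at hm0
    have hfe : (fun k => MeasurableSpace.comap (fun c => q' (Lext c) k)
        (inferInstance : MeasurableSpace ℝ)) = fun k => MeasurableSpace.comap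
          (fun c => q' (Lext c)) (MeasurableSpace.comap (fun x : Fin n → ℝ => x k)
            (inferInstance : MeasurableSpace ℝ)) := by
      funext k; rw [MeasurableSpace.comap_comp]; rfl
    rw [hfe]; exact hm0
  exact measurableSet_of_le hle hmem

lemma theta_main (B : Set (Fin n → NNReal)) (hB : MeasurableSet B)
    (hsat : GorbitTheta A B = B) :
    MeasurableSet[NAlg A] B := by
  have hcover : B = ⋃ S : Set (Fin n), B ∩ {c | ∀ j, c j ≠ 0 ↔ j ∈ S} := by
    ext c
    simp only [Set.mem_iUnion, Set.mem_inter_iff, Set.mem_setOf_eq]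
    constructor
    · intro hc; exact ⟨{j | c j ≠ 0}, hc, fun j => Iff.rfl⟩
    · rintro ⟨S, hc, -⟩; exact hc
  rw [hcover]
  exact MeasurableSet.iUnion fun S => stratum_main A B hB hsat S

end Stratum


/-- The generated σ-algebra on `ℤ_{≥0}ᵈ × Θ`. -/
def MAlg {d n : ℕ} (A : Matrix (Fin d) (Fin n) ℤ) :
    MeasurableSpace ((Fin d → ℕ) × (Fin n → NNReal)) :=
  MeasurableSpace.comap (Prod.fst : (Fin d → ℕ) × (Fin n → NNReal) → Fin d → ℕ)
      (inferInstance : MeasurableSpace (Fin d → ℕ)) ⊔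
    (⨆ α ∈ kerA A,
      MeasurableSpace.comap (fun p : (Fin d → ℕ) × (Fin n → NNReal) => Rfun α p.2)
        (inferInstance : MeasurableSpace ℝ)) ⊔
    MeasurableSpace.comap (fun p : (Fin d → ℕ) × (Fin n → NNReal) => Zfun p.2)
      (inferInstance : MeasurableSpace (Fin n → ℝ))

lemma NAlg_comap_snd_le {d n : ℕ} (A : Matrix (Fin d) (Fin n) ℤ) :
    MeasurableSpace.comap
      (Prod.snd : (Fin d → ℕ) × (Fin n → NNReal) → (Fin n → NNReal)) (NAlg A) ≤ MAlg A := by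
  have heq : MeasurableSpace.comap
      (Prod.snd : (Fin d → ℕ) × (Fin n → NNReal) → (Fin n → NNReal)) (NAlg A)
      = (⨆ α ∈ kerA A,
          MeasurableSpace.comap (fun p : (Fin d → ℕ) × (Fin n → NNReal) => Rfun α p.2)
            (inferInstance : MeasurableSpace ℝ)) ⊔
        MeasurableSpace.comap (fun p : (Fin d → ℕ) × (Fin n → NNReal) => Zfun p.2)
          (inferInstance : MeasurableSpace (Fin n → ℝ)) := by
    rw [show NAlg A = (⨆ α ∈ kerA A, MeasurableSpace.comap (Rfun α)
          (inferInstance : MeasurableSpace ℝ)) ⊔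
        MeasurableSpace.comap Zfun (inferInstance : MeasurableSpace (Fin n → ℝ)) from rfl,
      MeasurableSpace.comap_sup]
    congr 1
    · rw [MeasurableSpace.comap_iSup]
      refine iSup_congr fun α => ?_
      rw [MeasurableSpace.comap_iSup]
      refine iSup_congr fun hα => ?_
      rw [MeasurableSpace.comap_comp]
      rfl
    · rw [MeasurableSpace.comap_comp]
      rfl
  rw [heq, MAlg]
  exact sup_le (le_trans le_sup_right le_sup_left) le_sup_right

/-- On `ℤ_{≥0}ᵈ × Θ` with the action `g·(b,c) = (b, g·c)`, the
σ-algebra `O* = {B : G·B = B}` of invariant measurable sets equals the σ-algebra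
generated by the projection `π'` onto `ℤ_{≥0}ᵈ`, the maps `R_α ∘ π` (`α ∈ ker A`), and
`Z ∘ π`, where `π` is the projection onto `Θ`. -/
theorem invariantAlgebra_prod_eq_generated {d n : ℕ}
    (A : Matrix (Fin d) (Fin n) ℤ) (B : Set ((Fin d → ℕ) × (Fin n → NNReal))) :
    (MeasurableSet B ∧ GorbitProd A B = B) ↔
      MeasurableSet[
        MeasurableSpace.comap (Prod.fst : (Fin d → ℕ) × (Fin n → NNReal) → Fin d → ℕ)
          (inferInstance : MeasurableSpace (Fin d → ℕ)) ⊔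
        (⨆ α ∈ kerA A,
          MeasurableSpace.comap (fun p : (Fin d → ℕ) × (Fin n → NNReal) => Rfun α p.2)
            (inferInstance : MeasurableSpace ℝ)) ⊔
        MeasurableSpace.comap (fun p : (Fin d → ℕ) × (Fin n → NNReal) => Zfun p.2)
          (inferInstance : MeasurableSpace (Fin n → ℝ))] B := by
  classical
  suffices h : (MeasurableSet B ∧ GorbitProd A B = B) ↔ MeasurableSet[MAlg A] B from h
  constructor
  · rintro ⟨hmeas, hsat⟩
    have hdecomp : B = ⋃ b : Fin d → ℕ,
        ((Prod.fst ⁻¹' {b}) ∩ (Prod.snd ⁻¹' {c | (b, c) ∈ B})) := by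
      ext p
      simp only [Set.mem_iUnion, Set.mem_inter_iff, Set.mem_preimage,
        Set.mem_singleton_iff, Set.mem_setOf_eq]
      constructor
      · intro hp
        exact ⟨p.1, rfl, by simpa using hp⟩
      · rintro ⟨b, hb, h⟩
        subst hb
        simpa using h
    rw [hdecomp]
    refine MeasurableSet.iUnion fun b => MeasurableSet.inter ?_ ?_
    · refine measurableSet_of_le (m₁ := MeasurableSpace.comap
        (Prod.fst : (Fin d → ℕ) × (Fin n → NNReal) → Fin d → ℕ)
        (inferInstance : MeasurableSpace (Fin d → ℕ)))
        (le_trans le_sup_left le_sup_left) ⟨{b}, measurableSet_singleton b, rfl⟩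
    · refine measurableSet_of_le (NAlg_comap_snd_le A) ⟨{c | (b, c) ∈ B}, ?_, rfl⟩
      refine theta_main A _ (measurable_prodMk_left hmeas) ?_
      rw [gorbitTheta_eq_iff]
      intro g hg c hc
      exact (gorbitProd_eq_iff A).1 hsat g hg (b, c) hc
  · intro hB
    have hcle : ∀ {β : Type} [mβ : MeasurableSpace β]
        (f : (Fin d → ℕ) × (Fin n → NNReal) → β), Measurable f →
        MeasurableSpace.comap f mβ ≤ (inferInstance :
          MeasurableSpace ((Fin d → ℕ) × (Fin n → NNReal))) := by
      intro β mβ f hf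
      rintro s ⟨t, ht, rfl⟩
      exact hf ht
    constructor
    · have hle : MAlg A ≤ (inferInstance :
          MeasurableSpace ((Fin d → ℕ) × (Fin n → NNReal))) := by
        rw [MAlg]
        refine sup_le (sup_le ?_ ?_) ?_
        · exact hcle _ measurable_fst
        · exact iSup₂_le fun α hα => hcle _ ((measurable_Rfun α).comp measurable_snd)
        · exact hcle _ (measurable_Zfun.comp measurable_snd)
      exact measurableSet_of_le hle hB
    · have hle2 : MAlg A ≤ satAlg A := by
        rw [MAlg]
        refine sup_le (sup_le ?_ ?_) ?_
        · exact comap_le_satAlg A Prod.fst (fun g hg p => rfl)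
        · exact iSup₂_le fun α hα =>
            comap_le_satAlg A _ (fun g hg p => Rfun_actA A α hα g hg p.2)
        · exact comap_le_satAlg A _ (fun g hg p => Zfun_actA A g hg p.2)
      exact measurableSet_of_le hle2 hB
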